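/- arXiv:2501.00212 — 4 statements merged into one kernel-verified Lean document; each statement's English description precedes it below -/
import Mathlib

section
/- Let ξ₁ and ξ₂ be independent real Gaussian random variables with mean 0 and variance σ². Then for any polynomial f with complex coefficients and any real x, E[f(x + ξ₁ + i·ξ₂)] = f(x). -/
/-!
The law of `(ξ₁, ξ₂)` is a centred Gaussian product measure on `ℝ × ℝ`, hence invariant under
rotations, so the law of `Z = ξ₁ + i ξ₂` is invariant under `z ↦ e^{iθ} z`. With `θ = π / k`
this gives `E[Z^k] = -E[Z^k]`, so all moments `E[Z^k]`, `k ≥ 1`, vanish, and expanding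
`f(x + Z)` in powers of `Z` leaves only the constant term `f(x)`.
-/

open MeasureTheory ProbabilityTheory Complex Polynomial

namespace MeasureTheory

theorem integral_pow_eq_zero_of_map_exp_mul_eq {ν : Measure ℂ}
    (hν : ∀ θ : ℝ, ν.map (fun z => exp (θ * I) * z) = ν) {k : ℕ} (hk : k ≠ 0) :
    ∫ z, z ^ k ∂ν = 0 := by
  set w := exp ((Real.pi / k : ℝ) * I)
  have hw : w ^ k = -1 := by
    rw [← exp_nat_mul, ← exp_pi_mul_I]
    congr 1
    push_cast
    field_simp
  have h : ∫ z, z ^ k ∂ν = -∫ z, z ^ k ∂ν :=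
    calc ∫ z, z ^ k ∂ν = ∫ z, z ^ k ∂(ν.map fun z => w * z) := by rw [hν]
      _ = ∫ z, (w * z) ^ k ∂ν := integral_map (by fun_prop) (by fun_prop)
      _ = -∫ z, z ^ k ∂ν := by simp_rw [mul_pow, integral_const_mul, hw, neg_one_mul]
  linear_combination h / 2

theorem integral_eval_add_eq_eval {𝕜 : Type*} [RCLike 𝕜] [MeasurableSpace 𝕜] {ν : Measure 𝕜}
    [IsProbabilityMeasure ν] (h_int : ∀ k, Integrable (fun z => z ^ k) ν)
    (h_zero : ∀ k ≠ 0, ∫ z, z ^ k ∂ν = 0) (f : 𝕜[X]) (c : 𝕜) :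
    ∫ z, f.eval (c + z) ∂ν = f.eval c := by
  set g := f.comp (C c + X)
  have hg (z : 𝕜) :
      f.eval (c + z) = ∑ k ∈ Finset.range (g.natDegree + 1), g.coeff k * z ^ k := by
    rw [← eval_eq_sum_range]
    simp [g]
  simp_rw [hg]
  rw [integral_finsetSum _ fun k _ => (h_int k).const_mul _]
  simp_rw [integral_const_mul]
  rw [Finset.sum_eq_single 0 (fun k _ hk => by rw [h_zero k hk, mul_zero]) (by simp)]
  simp [g, coeff_zero_eq_eval_zero]

end MeasureTheory

namespace ProbabilityTheory.IsGaussian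

theorem integrable_pow {𝕜 : Type*} [RCLike 𝕜] [MeasurableSpace 𝕜] [BorelSpace 𝕜]
    (ν : Measure 𝕜) [IsGaussian ν] (k : ℕ) : Integrable (fun z => z ^ k) ν :=
  (memLp_id ν k (by simp)).integrable_norm_pow'.mono' (by fun_prop)
    (ae_of_all _ fun z => by simp)

theorem map_exp_mul_map_equivRealProd_symm {γ : Measure ℝ} [IsGaussian γ]
    (hγ : γ[id] = 0) (θ : ℝ) :
    ((γ.prod γ).map equivRealProdCLM.symm).map (fun z => exp (θ * I) * z) =
      (γ.prod γ).map equivRealProdCLM.symm := by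
  have h : (fun z => exp (θ * I) * z) ∘ equivRealProdCLM.symm =
      equivRealProdCLM.symm ∘ ContinuousLinearMap.rotation (-θ) := by
    funext p
    simp only [Function.comp_apply, equivRealProdCLM_symm_apply, ContinuousLinearMap.rotation_apply,
      exp_mul_I, Real.cos_neg, Real.sin_neg, smul_eq_mul]
    push_cast
    linear_combination (sin θ * p.2) * I_sq
  rw [Measure.map_map (by fun_prop) (by fun_prop), h,
    ← Measure.map_map (by fun_prop) (by fun_prop), map_rotation_eq_self hγ]

end ProbabilityTheory.IsGaussian

theorem polynomial_complex_debias_general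
    {Ω : Type*} [MeasurableSpace Ω] (μ : Measure Ω) [IsProbabilityMeasure μ]
    (ξ₁ ξ₂ : Ω → ℝ) (σ2 : NNReal)
    (hindep : IndepFun ξ₁ ξ₂ μ)
    (hlaw₁ : Measure.map ξ₁ μ = gaussianReal 0 σ2)
    (hlaw₂ : Measure.map ξ₂ μ = gaussianReal 0 σ2)
    (f : Polynomial ℂ) (x : ℝ) :
    ∫ ω, f.eval ((x : ℂ) + (ξ₁ ω : ℂ) + Complex.I * (ξ₂ ω : ℂ)) ∂μ =
      f.eval (x : ℂ) := by
  have h₁ : AEMeasurable ξ₁ μ := .of_map_ne_zero (hlaw₁ ▸ IsProbabilityMeasure.ne_zero _)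
  have h₂ : AEMeasurable ξ₂ μ := .of_map_ne_zero (hlaw₂ ▸ IsProbabilityMeasure.ne_zero _)
  have hpair : μ.map (fun ω => (ξ₁ ω, ξ₂ ω)) = (gaussianReal 0 σ2).prod (gaussianReal 0 σ2) := by
    rw [(indepFun_iff_map_prod_eq_prod_map_map h₁ h₂).mp hindep, hlaw₁, hlaw₂]
  have hlaw : μ.map (fun ω => (ξ₁ ω : ℂ) + I * ξ₂ ω) =
      ((gaussianReal 0 σ2).prod (gaussianReal 0 σ2)).map equivRealProdCLM.symm := by
    rw [← hpair, AEMeasurable.map_map_of_aemeasurable (by fun_prop) (h₁.prodMk h₂)]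
    congr 1
    funext ω
    simp [equivRealProdCLM_symm_apply, mul_comm]
  calc ∫ ω, f.eval ((x : ℂ) + ξ₁ ω + I * ξ₂ ω) ∂μ
      = ∫ z, f.eval (x + z) ∂(μ.map fun ω => (ξ₁ ω : ℂ) + I * ξ₂ ω) := by
        rw [integral_map (by fun_prop) (by fun_prop)]
        simp_rw [add_assoc]
    _ = f.eval (x : ℂ) := by
        rw [hlaw]
        refine integral_eval_add_eq_eval (IsGaussian.integrable_pow _) (fun _ hk => ?_) f x
        refine integral_pow_eq_zero_of_map_exp_mul_eq (fun θ => ?_) hk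
        exact IsGaussian.map_exp_mul_map_equivRealProd_symm (by simp [integral_id_gaussianReal]) θ

/-- If `ξ₁, ξ₂` are independent real Gaussian random variables with mean `0` and
variance `σ²`, then for any polynomial `f` with complex coefficients and any `x : ℝ`,
`E[f(x + ξ₁ + i ξ₂)] = f(x)`. -/
theorem polynomial_complex_debias
    {Ω : Type*} [MeasurableSpace Ω] (μ : Measure Ω) [IsProbabilityMeasure μ]
    (ξ₁ ξ₂ : Ω → ℝ) (σ2 : NNReal) (hσ2 : 0 < σ2)
    (hmeas₁ : Measurable ξ₁) (hmeas₂ : Measurable ξ₂)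
    (hindep : IndepFun ξ₁ ξ₂ μ)
    (hlaw₁ : Measure.map ξ₁ μ = gaussianReal 0 σ2)
    (hlaw₂ : Measure.map ξ₂ μ = gaussianReal 0 σ2)
    (f : Polynomial ℂ) (x : ℝ) :
    ∫ ω, f.eval ((x : ℂ) + (ξ₁ ω : ℂ) + Complex.I * (ξ₂ ω : ℂ)) ∂μ =
      f.eval (x : ℂ) :=
  polynomial_complex_debias_general μ ξ₁ ξ₂ σ2 hindep hlaw₁ hlaw₂ f x
end

section
/- Let ξ₁ and ξ₂ be independent standard normal random variables. Then for any entire function f : ℂ → ℂ whose Taylor series satisfies that expectation and summation can be exchanged (e.g. f of exponential type with summable moment bounds), E[f(x + ξ₁ + i·ξ₂)] = f(x) for every real x. -/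
/-!
The law of `ξ₁ + i ξ₂` is the standard Gaussian measure on `ℂ ≅ ℝ²`, which is invariant under
rotations. Rotating by `exp (iπ/n)` multiplies `E[ζⁿ]` by `-1`, so every moment of positive order
vanishes, and by the binomial theorem `E[(x + ζ)ⁿ] = xⁿ`. The moment hypothesis lets the power
series of `f` be integrated term by term.
-/

open MeasureTheory ProbabilityTheory Complex

lemma integral_pow_eq_zero_of_map_rotation_eq_self {ν : Measure ℂ}
    (hν : ∀ a : Circle, ν.map (rotation a) = ν) {n : ℕ} (hn : n ≠ 0) :
    ∫ z, z ^ n ∂ν = 0 := by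
  have hρ : (Circle.exp (Real.pi / n) : ℂ) ^ n = -1 := by
    rw [Circle.coe_exp, ← Complex.exp_nat_mul]
    push_cast
    rw [show (n : ℂ) * (Real.pi / n * I) = Real.pi * I by field_simp]
    exact Complex.exp_pi_mul_I
  have h : ∫ z, z ^ n ∂ν = (Circle.exp (Real.pi / n) : ℂ) ^ n * ∫ z, z ^ n ∂ν := by
    conv_lhs => rw [← hν (Circle.exp (Real.pi / n))]
    rw [integral_map (by fun_prop) (by fun_prop)]
    simp only [rotation_apply, mul_pow, integral_const_mul]
  rw [hρ, neg_one_mul] at h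
  exact self_eq_neg.mp h

lemma integral_add_pow_eq_pow_of_map_rotation_eq_self {ν : Measure ℂ} [IsProbabilityMeasure ν]
    (hν : ∀ a : Circle, ν.map (rotation a) = ν) (hint : ∀ n : ℕ, Integrable (fun z => z ^ n) ν)
    (c : ℂ) (n : ℕ) : ∫ z, (c + z) ^ n ∂ν = c ^ n := by
  simp_rw [add_comm c, add_pow]
  rw [integral_finsetSum _ fun k _ => ((hint k).mul_const _).mul_const _]
  simp_rw [integral_mul_const]
  rw [Finset.sum_eq_single_of_mem 0 (by simp)]
  · simp
  · intro k _ hk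
    rw [integral_pow_eq_zero_of_map_rotation_eq_self hν hk]
    simp

lemma integrable_add_pow_stdGaussian (c : ℂ) (n : ℕ) :
    Integrable (fun z => (c + z) ^ n) (stdGaussian ℂ) :=
  ((memLp_const c).add (IsGaussian.memLp_id _ n (by simp))).integrable_norm_pow'.mono'
    (by fun_prop) (.of_forall fun z => (norm_pow (c + z) n).le)

lemma map_add_mul_I_prod_gaussianReal :
    ((gaussianReal 0 1).prod (gaussianReal 0 1)).map (fun p : ℝ × ℝ => (p.1 : ℂ) + I * p.2)
      = stdGaussian ℂ := by
  rw [stdGaussian_eq_map_pi_orthonormalBasis orthonormalBasisOneI,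
    ← (measurePreserving_finTwoArrow (gaussianReal 0 1)).map_eq, Measure.map_map (by fun_prop)
    (by fun_prop)]
  congr 1
  ext x
  simp [Fin.sum_univ_two, mul_comm]

lemma ProbabilityTheory.IndepFun.map_add_mul_I_eq_stdGaussian {Ω : Type*} [MeasurableSpace Ω]
    {μ : Measure Ω} [IsFiniteMeasure μ] {ξ₁ ξ₂ : Ω → ℝ}
    (hmeas₁ : Measurable ξ₁) (hmeas₂ : Measurable ξ₂) (hindep : IndepFun ξ₁ ξ₂ μ)
    (hlaw₁ : μ.map ξ₁ = gaussianReal 0 1) (hlaw₂ : μ.map ξ₂ = gaussianReal 0 1) :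
    μ.map (fun ω => (ξ₁ ω : ℂ) + I * ξ₂ ω) = stdGaussian ℂ := by
  have hjoint := (indepFun_iff_map_prod_eq_prod_map_map hmeas₁.aemeasurable
    hmeas₂.aemeasurable).1 hindep
  rw [hlaw₁, hlaw₂] at hjoint
  rw [← map_add_mul_I_prod_gaussianReal, ← hjoint, Measure.map_map (by fun_prop) (by fun_prop)]
  rfl

lemma integral_tsum_mul_pow {Ω : Type*} [MeasurableSpace Ω] {μ : Measure Ω} {Z : Ω → ℂ}
    (hint : ∀ n : ℕ, Integrable (fun ω => Z ω ^ n) μ) {a : ℕ → ℂ}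
    (hsum : Summable fun n => ‖a n‖ * ∫ ω, ‖Z ω‖ ^ n ∂μ) :
    ∫ ω, ∑' n, a n * Z ω ^ n ∂μ = ∑' n, a n * ∫ ω, Z ω ^ n ∂μ := by
  simp_rw [← integral_const_mul]
  refine (integral_tsum_of_summable_integral_norm (fun n => (hint n).const_mul (a n)) ?_).symm
  simpa only [norm_mul, norm_pow, integral_const_mul] using hsum

theorem analytic_complex_debias_general
    {Ω : Type*} [MeasurableSpace Ω] (μ : Measure Ω) [IsProbabilityMeasure μ]
    (ξ₁ ξ₂ : Ω → ℝ)
    (hmeas₁ : Measurable ξ₁) (hmeas₂ : Measurable ξ₂)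
    (hindep : IndepFun ξ₁ ξ₂ μ)
    (hlaw₁ : Measure.map ξ₁ μ = gaussianReal 0 1)
    (hlaw₂ : Measure.map ξ₂ μ = gaussianReal 0 1)
    (f : ℂ → ℂ) (a : ℕ → ℂ)
    (hf_series : ∀ z : ℂ, f z = ∑' n : ℕ, a n * z ^ n)
    (x : ℝ)
    (hmoments : Summable fun n : ℕ =>
      ‖a n‖ * ∫ ω, ‖(x : ℂ) + (ξ₁ ω : ℂ) + Complex.I * (ξ₂ ω : ℂ)‖ ^ n ∂μ) :
    ∫ ω, f ((x : ℂ) + (ξ₁ ω : ℂ) + Complex.I * (ξ₂ ω : ℂ)) ∂μ = f (x : ℂ) := by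
  have hlaw := hindep.map_add_mul_I_eq_stdGaussian hmeas₁ hmeas₂ hlaw₁ hlaw₂
  have hζ : Measurable fun ω => (ξ₁ ω : ℂ) + I * ξ₂ ω := by fun_prop
  have hint (n : ℕ) : Integrable (fun ω => ((x : ℂ) + ξ₁ ω + I * ξ₂ ω) ^ n) μ := by
    simp_rw [add_assoc]
    exact (hlaw ▸ integrable_add_pow_stdGaussian x n).comp_measurable hζ
  have hmom (n : ℕ) : ∫ ω, ((x : ℂ) + ξ₁ ω + I * ξ₂ ω) ^ n ∂μ = x ^ n := by
    simp_rw [add_assoc]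
    rw [← integral_map hζ.aemeasurable (by fun_prop) (f := fun z => ((x : ℂ) + z) ^ n), hlaw,
      integral_add_pow_eq_pow_of_map_rotation_eq_self (fun u => stdGaussian_map (rotation u))
        (by simpa using integrable_add_pow_stdGaussian 0)]
  simp_rw [hf_series, integral_tsum_mul_pow hint hmoments, hmom]

/-- If `ξ₁, ξ₂` are independent standard normal random variables and `f : ℂ → ℂ` is an
entire function given by the everywhere-convergent power series `f z = ∑' n, a n * z ^ n`,
whose moment bounds `∑' n, ‖a n‖ * E[‖x + ξ₁ + i ξ₂‖ ^ n]` are summable (so that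
expectation and summation can be exchanged), then `E[f(x + ξ₁ + i ξ₂)] = f(x)` for all
real `x`. -/
theorem analytic_complex_debias
    {Ω : Type*} [MeasurableSpace Ω] (μ : Measure Ω) [IsProbabilityMeasure μ]
    (ξ₁ ξ₂ : Ω → ℝ)
    (hmeas₁ : Measurable ξ₁) (hmeas₂ : Measurable ξ₂)
    (hindep : IndepFun ξ₁ ξ₂ μ)
    (hlaw₁ : Measure.map ξ₁ μ = gaussianReal 0 1)
    (hlaw₂ : Measure.map ξ₂ μ = gaussianReal 0 1)
    (f : ℂ → ℂ) (a : ℕ → ℂ)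
    (hf_entire : AnalyticOn ℂ f Set.univ)
    (hf_series : ∀ z : ℂ, f z = ∑' n : ℕ, a n * z ^ n)
    (x : ℝ)
    (hmoments : Summable fun n : ℕ =>
      ‖a n‖ * ∫ ω, ‖(x : ℂ) + (ξ₁ ω : ℂ) + Complex.I * (ξ₂ ω : ℂ)‖ ^ n ∂μ) :
    ∫ ω, f ((x : ℂ) + (ξ₁ ω : ℂ) + Complex.I * (ξ₂ ω : ℂ)) ∂μ = f (x : ℂ) :=
  analytic_complex_debias_general μ ξ₁ ξ₂ hmeas₁ hmeas₂ hindep hlaw₁ hlaw₂ f a hf_series x hmoments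
end

section
/- Let Ω and H be symmetric positive definite d×d real matrices with Ω − H positive definite, and let ξ ~ N(0, (2Ω)⁻¹) in ℝᵈ. Then for all real vectors x₁, x₂, E[exp{−(x₁ − x₂ − i ξ)ᵀ H (x₁ − x₂ − i ξ)}] = √(det Ω / det(Ω − H)) · exp{−(x₁ − x₂)ᵀ H_* (x₁ − x₂)}, where H_* = (H⁻¹ − Ω⁻¹)⁻¹. -/
/-!
Expanding the quadratic form, the imaginary shift `−iξ` contributes `+ξᵀHξ`, which the Gaussian
weight `exp(−ξᵀΩξ)` absorbs into `exp(−ξᵀ(Ω − H)ξ)`; what remains is the Fourier transform of a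
Gaussian, `∫ exp(−ξᵀAξ + 2i bᵀξ) dξ = √(πᵈ / det A) · exp(−bᵀA⁻¹b)` with `A = Ω − H` and
`b = H(x₁ − x₂)`. Writing `A = BᵀB` and substituting `ξ = B⁻¹u` reduces it to a product of
one-dimensional Gaussian integrals. The exponents combine through
`(H⁻¹ − Ω⁻¹)⁻¹ = H + H(Ω − H)⁻¹H`.
-/

open MeasureTheory Matrix Complex

section

variable {ι : Type*} [Fintype ι]

theorem integral_comp_mulVec [DecidableEq ι] {E : Type*} [NormedAddCommGroup E] [NormedSpace ℝ E]
    {M : Matrix ι ι ℝ} (hM : M.det ≠ 0) (g : (ι → ℝ) → E) :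
    ∫ ξ, g ξ = |M.det| • ∫ u, g (M *ᵥ u) := by
  let := M.invertibleOfIsUnitDet hM.isUnit
  have hemb : MeasurableEmbedding (toLin' M) :=
    (M.toLinearEquiv' this).toContinuousLinearEquiv.toHomeomorph.measurableEmbedding
  simp_rw [← toLin'_apply M]
  rw [← hemb.integral_map, Real.map_matrix_volume_pi_eq_smul_volume_pi hM,
    integral_smul_measure, ENNReal.toReal_ofReal (abs_nonneg _), smul_smul, abs_inv,
    mul_inv_cancel₀ (abs_ne_zero.2 hM), one_smul]

theorem Matrix.PosDef.exists_eq_transpose_mul_self {A : Matrix ι ι ℝ} (hA : A.PosDef) :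
    ∃ B : Matrix ι ι ℝ, A = Bᵀ * B := by
  classical
  open scoped MatrixOrder in
  obtain ⟨B, hB⟩ := CStarAlgebra.nonneg_iff_eq_star_mul_self.mp hA.posSemidef.nonneg
  exact ⟨B, by rwa [star_eq_conjTranspose, conjTranspose_eq_transpose_of_trivial] at hB⟩

theorem Matrix.dotProduct_transpose_mul_mulVec {R : Type*} [CommSemiring R]
    (B : Matrix ι ι R) (v w : ι → R) :
    v ⬝ᵥ (Bᵀ * B) *ᵥ w = (B *ᵥ v) ⬝ᵥ (B *ᵥ w) := by
  rw [← mulVec_mulVec, dotProduct_mulVec, vecMul_transpose]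

theorem integral_cexp_neg_dotProduct_self_add (b : ι → ℝ) :
    ∫ u : ι → ℝ, cexp (-(u ⬝ᵥ u : ℝ) + 2 * I * (b ⬝ᵥ u : ℝ))
      = (√Real.pi ^ Fintype.card ι : ℝ) * cexp (-(b ⬝ᵥ b : ℝ)) := by
  have hsum (u : ι → ℝ) : -((u ⬝ᵥ u : ℝ) : ℂ) + 2 * I * (b ⬝ᵥ u : ℝ)
      = -∑ i, (1 : ℂ) * (u i : ℂ) ^ 2 + ∑ i, (2 * I * b i) * u i := by
    simp only [dotProduct, ofReal_sum, ofReal_mul, Finset.mul_sum, one_mul, sq, mul_assoc]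
  have hcoef (i : ι) : (2 * I * b i) ^ 2 / (4 * 1) = -((b i * b i : ℝ) : ℂ) := by
    push_cast
    linear_combination (b i : ℂ) ^ 2 * I_sq
  have hpi : ((Real.pi : ℂ) / 1) ^ (1 / 2 : ℂ) = (√Real.pi : ℝ) := by
    rw [div_one, Real.sqrt_eq_rpow, ofReal_cpow Real.pi_pos.le]; norm_num
  simp_rw [hsum]
  rw [GaussianFourier.integral_cexp_neg_sum_mul_add (fun _ => by norm_num)]
  simp only [hcoef, hpi, Finset.prod_mul_distrib, Finset.prod_const, Finset.card_univ,
    ← exp_sum, dotProduct, ofReal_sum, Finset.sum_neg_distrib, ofReal_pow]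

theorem integral_cexp_neg_dotProduct_mulVec_add [DecidableEq ι] {A : Matrix ι ι ℝ} (hA : A.PosDef)
    (b : ι → ℝ) :
    ∫ ξ : ι → ℝ, cexp (-(ξ ⬝ᵥ A *ᵥ ξ : ℝ) + 2 * I * (b ⬝ᵥ ξ : ℝ))
      = (√(Real.pi ^ Fintype.card ι / A.det) : ℝ) * cexp (-(b ⬝ᵥ A⁻¹ *ᵥ b : ℝ)) := by
  obtain ⟨B, rfl⟩ := hA.exists_eq_transpose_mul_self
  have hdet : (Bᵀ * B).det = B.det ^ 2 := by rw [det_mul, det_transpose, sq]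
  have hB : IsUnit B.det := isUnit_iff_ne_zero.2 fun h => by
    simpa [hdet, h] using hA.det_pos.ne'
  have hquad (u : ι → ℝ) : B⁻¹ *ᵥ u ⬝ᵥ (Bᵀ * B) *ᵥ (B⁻¹ *ᵥ u) = u ⬝ᵥ u := by
    rw [dotProduct_transpose_mul_mulVec, mulVec_mulVec, mul_nonsing_inv _ hB, one_mulVec]
  have hlin (u : ι → ℝ) : b ⬝ᵥ B⁻¹ *ᵥ u = (b ᵥ* B⁻¹) ⬝ᵥ u := dotProduct_mulVec _ _ _
  have hnorm : (b ᵥ* B⁻¹) ⬝ᵥ (b ᵥ* B⁻¹) = b ⬝ᵥ (Bᵀ * B)⁻¹ *ᵥ b := by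
    rw [← dotProduct_mulVec, ← mulVec_transpose, mulVec_mulVec, Matrix.mul_inv_rev,
      transpose_nonsing_inv]
  have hconst : |B⁻¹.det| * √Real.pi ^ Fintype.card ι
      = √(Real.pi ^ Fintype.card ι / (Bᵀ * B).det) := by
    have hpow : √(Real.pi ^ Fintype.card ι) = √Real.pi ^ Fintype.card ι := by
      rw [← Real.sqrt_sq (by positivity : 0 ≤ √Real.pi ^ Fintype.card ι), ← pow_mul, mul_comm,
        pow_mul, Real.sq_sqrt Real.pi_pos.le]
    rw [hdet, Real.sqrt_div' _ (sq_nonneg _), Real.sqrt_sq_eq_abs, hpow, det_nonsing_inv,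
      Ring.inverse_eq_inv', abs_inv, inv_mul_eq_div]
  rw [integral_comp_mulVec (isUnit_nonsing_inv_det _ hB).ne_zero]
  simp only [hquad, hlin]
  rw [integral_cexp_neg_dotProduct_self_add, hnorm, ← hconst, real_smul, ← mul_assoc]
  push_cast
  ring

theorem Matrix.inv_sub_inv_inv {R : Type*} [CommRing R] [DecidableEq ι] {H Ω : Matrix ι ι R}
    (hH : IsUnit H) (hΩ : IsUnit Ω) (hΩH : IsUnit (Ω - H)) :
    (H⁻¹ - Ω⁻¹)⁻¹ = H + H * (Ω - H)⁻¹ * H := by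
  rw [inv_sub_inv (iff_of_true hH hΩ), Matrix.mul_inv_rev, Matrix.mul_inv_rev,
    nonsing_inv_nonsing_inv _ ((isUnit_iff_isUnit_det _).1 hH),
    nonsing_inv_nonsing_inv _ ((isUnit_iff_isUnit_det _).1 hΩ)]
  calc Ω * ((Ω - H)⁻¹ * H) = ((Ω - H) + H) * (Ω - H)⁻¹ * H := by rw [sub_add_cancel, mul_assoc]
    _ = H + H * (Ω - H)⁻¹ * H := by
      rw [add_mul, add_mul, mul_nonsing_inv _ ((isUnit_iff_isUnit_det _).1 hΩH), one_mul]

theorem Matrix.PosDef.dotProduct_inv_sub_inv_inv_mulVec [DecidableEq ι] {H Ω : Matrix ι ι ℝ}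
    (hH : H.PosDef) (hΩH : (Ω - H).PosDef) (y : ι → ℝ) :
    y ⬝ᵥ (H⁻¹ - Ω⁻¹)⁻¹ *ᵥ y = y ⬝ᵥ H *ᵥ y + (H *ᵥ y) ⬝ᵥ (Ω - H)⁻¹ *ᵥ (H *ᵥ y) := by
  have hΩ : Ω.PosDef := by simpa using hΩH.add hH
  rw [inv_sub_inv_inv hH.isUnit hΩ.isUnit hΩH.isUnit, add_mulVec, dotProduct_add,
    ← mulVec_mulVec, ← mulVec_mulVec]
  congr 1
  rw [dotProduct_mulVec, ← mulVec_transpose, (show H.IsSymm by simpa using hH.isHermitian).eq]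

theorem Matrix.ofReal_dotProduct_map_ofReal_mulVec (H : Matrix ι ι ℝ) (v w : ι → ℝ) :
    (ofReal ∘ v) ⬝ᵥ H.map ofReal *ᵥ (ofReal ∘ w) = ((v ⬝ᵥ H *ᵥ w : ℝ) : ℂ) := by
  change _ = ofRealHom _
  rw [RingHom.map_dotProduct]
  congr 1
  funext i
  exact (RingHom.map_mulVec ofRealHom H w i).symm

theorem Matrix.IsSymm.dotProduct_mulVec_ofReal_sub_I_mul {H : Matrix ι ι ℝ} (hH : H.IsSymm)
    (y ξ : ι → ℝ) :
    (fun j => (y j : ℂ) - I * ξ j) ⬝ᵥ H.map ofReal *ᵥ (fun j => (y j : ℂ) - I * ξ j)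
      = ((y ⬝ᵥ H *ᵥ y - ξ ⬝ᵥ H *ᵥ ξ : ℝ) : ℂ) - 2 * I * ((H *ᵥ y) ⬝ᵥ ξ : ℝ) := by
  have hvec : (fun j => (y j : ℂ) - I * ξ j) = ofReal ∘ y - I • ofReal ∘ ξ := by
    funext j; simp
  have hyξ : y ⬝ᵥ H *ᵥ ξ = (H *ᵥ y) ⬝ᵥ ξ := by
    rw [dotProduct_mulVec, ← mulVec_transpose, hH.eq]
  have hξy : ξ ⬝ᵥ H *ᵥ y = (H *ᵥ y) ⬝ᵥ ξ := dotProduct_comm _ _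
  rw [hvec]
  simp only [sub_dotProduct, dotProduct_sub, mulVec_sub, mulVec_smul, dotProduct_smul,
    smul_dotProduct, smul_eq_mul, ofReal_dotProduct_map_ofReal_mulVec, hyξ, hξy]
  push_cast
  linear_combination (↑(ξ ⬝ᵥ H *ᵥ ξ) : ℂ) * I_sq

theorem Matrix.IsSymm.rexp_smul_cexp_neg_ofReal_sub_I_mul {H : Matrix ι ι ℝ} (hH : H.IsSymm)
    (Ω : Matrix ι ι ℝ) (y ξ : ι → ℝ) :
    Real.exp (-(ξ ⬝ᵥ Ω *ᵥ ξ)) •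
        cexp (-((fun j => (y j : ℂ) - I * ξ j) ⬝ᵥ H.map ofReal *ᵥ (fun j => (y j : ℂ) - I * ξ j)))
      = cexp (-(y ⬝ᵥ H *ᵥ y : ℝ)) *
          cexp (-(ξ ⬝ᵥ (Ω - H) *ᵥ ξ : ℝ) + 2 * I * ((H *ᵥ y) ⬝ᵥ ξ : ℝ)) := by
  rw [hH.dotProduct_mulVec_ofReal_sub_I_mul, sub_mulVec, dotProduct_sub, real_smul, ofReal_exp,
    ← exp_add, ← exp_add]
  push_cast
  ring_nf

end

theorem complex_gaussian_kernel_integral_general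
    (d : ℕ) (Om H : Matrix (Fin d) (Fin d) ℝ)
    (hH : H.PosDef) (hOmH : (Om - H).PosDef)
    (x₁ x₂ : Fin d → ℝ) :
    (∫ ξ : Fin d → ℝ,
      (Real.sqrt (((2 : ℝ) • Om).det / (2 * Real.pi) ^ d)
          * Real.exp (-(ξ ⬝ᵥ Om.mulVec ξ))) •
        Complex.exp (-((fun j => ((x₁ j - x₂ j : ℝ) : ℂ) - Complex.I * (ξ j : ℂ)) ⬝ᵥ
          (H.map (Complex.ofReal)).mulVec
            (fun j => ((x₁ j - x₂ j : ℝ) : ℂ) - Complex.I * (ξ j : ℂ)))))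
    = (Real.sqrt (Om.det / (Om - H).det) : ℂ) *
      Complex.exp (-((((x₁ - x₂) ⬝ᵥ ((H⁻¹ - Om⁻¹)⁻¹).mulVec (x₁ - x₂) : ℝ)) : ℂ)) := by
  have hHsymm : H.IsSymm := by simpa using hH.isHermitian
  have hconst : √(((2 : ℝ) • Om).det / (2 * Real.pi) ^ d) * √(Real.pi ^ d / (Om - H).det)
      = √(Om.det / (Om - H).det) := by
    have hOmdet := (show Om.PosDef by simpa using hOmH.add hH).det_pos
    rw [det_smul, Fintype.card_fin, ← Real.sqrt_mul (by positivity)]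
    congr 1
    field_simp
    ring
  simp_rw [mul_smul, ← Pi.sub_apply x₁ x₂, hHsymm.rexp_smul_cexp_neg_ofReal_sub_I_mul]
  rw [integral_smul, integral_const_mul, integral_cexp_neg_dotProduct_mulVec_add hOmH,
    Fintype.card_fin, hH.dotProduct_inv_sub_inv_inv_mulVec hOmH, ← hconst, real_smul]
  push_cast
  rw [neg_add, exp_add]
  ring

/-- Closed-form complex Gaussian integral: if `Ω, H` are symmetric positive definite with
`Ω − H` positive definite, and `ξ ~ N(0, (2Ω)⁻¹)` (written via its density against
Lebesgue measure), then
`E[exp{−(x₁−x₂−iξ)ᵀ H (x₁−x₂−iξ)}] = √(det Ω / det(Ω−H)) · exp{−(x₁−x₂)ᵀ H⋆ (x₁−x₂)}`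
with `H⋆ = (H⁻¹ − Ω⁻¹)⁻¹`. -/
theorem complex_gaussian_kernel_integral
    (d : ℕ) (Om H : Matrix (Fin d) (Fin d) ℝ)
    (hOmSymm : Om.IsSymm) (hHSymm : H.IsSymm)
    (hOm : Om.PosDef) (hH : H.PosDef) (hOmH : (Om - H).PosDef)
    (x₁ x₂ : Fin d → ℝ) :
    (∫ ξ : Fin d → ℝ,
      (Real.sqrt (((2 : ℝ) • Om).det / (2 * Real.pi) ^ d)
          * Real.exp (-(ξ ⬝ᵥ Om.mulVec ξ))) •
        Complex.exp (-((fun j => ((x₁ j - x₂ j : ℝ) : ℂ) - Complex.I * (ξ j : ℂ)) ⬝ᵥ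
          (H.map (Complex.ofReal)).mulVec
            (fun j => ((x₁ j - x₂ j : ℝ) : ℂ) - Complex.I * (ξ j : ℂ)))))
    = (Real.sqrt (Om.det / (Om - H).det) : ℂ) *
      Complex.exp (-((((x₁ - x₂) ⬝ᵥ ((H⁻¹ - Om⁻¹)⁻¹).mulVec (x₁ - x₂) : ℝ)) : ℂ)) :=
  complex_gaussian_kernel_integral_general d Om H hH hOmH x₁ x₂
end

section
/- Let A, Â be bounded self-adjoint operators on a real Hilbert space H with A positive semi-definite and ‖Â − A‖ ≤ ε for some 0 ≤ ε < λ, let ζ, ζ̂ ∈ H with ‖ζ̂ − ζ‖ ≤ ε₁, and let s̄ minimize ⟨s,(A+λI)s⟩ + ⟨ζ,s⟩ while ŝ minimizes ⟨s,(Â+λI)s⟩ + ⟨ζ̂,s⟩. Then (λ − ε)·‖ŝ − s̄‖ ≤ ε₁ + 2ε‖s̄‖, and hence ‖ŝ − s̄‖ ≤ (ε₁ + 2ε‖s̄‖)/(λ − ε). -/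
/-!
Write `d = ŝ - s̄`. Subtracting the two optimality conditions gives
`(Â + λ) d = -((Â - A) s̄ + (ζ̂ - ζ) / 2)`, whose norm is at most `ε‖s̄‖ + ε₁ / 2`.
On the other hand `A ⪰ 0` and `‖Â - A‖ ≤ ε` make `Â + λ` coercive with constant `λ - ε`,
so `(λ - ε)‖d‖ ≤ ‖(Â + λ) d‖` by Cauchy–Schwarz.
-/

open RealInnerProductSpace

section

variable {E : Type*} [SeminormedAddCommGroup E] [InnerProductSpace ℝ E]

theorem mul_norm_le_norm_of_mul_norm_sq_le_inner {c : ℝ} {x y : E}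
    (h : c * ‖x‖ ^ 2 ≤ ⟪x, y⟫) : c * ‖x‖ ≤ ‖y‖ := by
  rcases (norm_nonneg x).eq_or_lt with hx | hx
  · simp [← hx]
  · have : c * ‖x‖ * ‖x‖ ≤ ‖y‖ * ‖x‖ := by
      nlinarith [real_inner_le_norm x y]
    exact le_of_mul_le_mul_right this hx

theorem sub_mul_norm_sq_le_inner_apply_add_smul {A B : E →L[ℝ] E} {ε : ℝ}
    (hA : ∀ x, 0 ≤ ⟪x, A x⟫) (hBA : ‖B - A‖ ≤ ε) (lam : ℝ) (x : E) :
    (lam - ε) * ‖x‖ ^ 2 ≤ ⟪x, B x + lam • x⟫ := by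
  have hsplit : ⟪x, B x + lam • x⟫ = ⟪x, A x⟫ + ⟪x, (B - A) x⟫ + lam * ‖x‖ ^ 2 := by
    simp only [sub_apply, inner_add_right, inner_sub_right,
      inner_smul_right, real_inner_self_eq_norm_sq]
    ring
  have hpert : -(ε * ‖x‖ ^ 2) ≤ ⟪x, (B - A) x⟫ :=
    neg_le_of_abs_le <| calc
      |⟪x, (B - A) x⟫| ≤ ‖x‖ * ‖(B - A) x‖ := abs_real_inner_le_norm _ _
      _ ≤ ‖x‖ * (ε * ‖x‖) := by gcongr; exact (B - A).le_of_opNorm_le hBA x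
      _ = ε * ‖x‖ ^ 2 := by ring
  linarith [hA x]

theorem apply_sub_add_smul_sub_eq_of_first_order {A B : E →L[ℝ] E} {lam : ℝ} {s t ζ ξ : E}
    (hs : (2 : ℝ) • (A s + lam • s) + ζ = 0) (ht : (2 : ℝ) • (B t + lam • t) + ξ = 0) :
    B (t - s) + lam • (t - s) = -((B - A) s + (2 : ℝ)⁻¹ • (ξ - ζ)) := by
  rw [sub_apply, map_sub]
  linear_combination (norm := module) (2 : ℝ)⁻¹ • (ht - hs)

end

theorem perturbed_quadratic_minimizer_bound_general
    {H : Type*} [NormedAddCommGroup H] [InnerProductSpace ℝ H]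
    (A Ahat : H →L[ℝ] H)
    (hA_psd : ∀ s : H, 0 ≤ ⟪s, A s⟫)
    (lam ε ε₁ : ℝ) (heps_lt : ε < lam)
    (hAop : ‖Ahat - A‖ ≤ ε)
    (ζ ζhat : H) (hζ : ‖ζhat - ζ‖ ≤ ε₁)
    (sbar shat : H)
    (hsbar : (2 : ℝ) • (A sbar + lam • sbar) + ζ = 0)
    (hshat : (2 : ℝ) • (Ahat shat + lam • shat) + ζhat = 0) :
    (lam - ε) * ‖shat - sbar‖ ≤ ε₁ + 2 * ε * ‖sbar‖ ∧
    ‖shat - sbar‖ ≤ (ε₁ + 2 * ε * ‖sbar‖) / (lam - ε) := by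
  have hε : 0 ≤ ε := (norm_nonneg _).trans hAop
  have hε₁ : 0 ≤ ε₁ := (norm_nonneg _).trans hζ
  have hrhs : ‖Ahat (shat - sbar) + lam • (shat - sbar)‖ ≤ ε * ‖sbar‖ + ε₁ / 2 := by
    rw [apply_sub_add_smul_sub_eq_of_first_order hsbar hshat, norm_neg]
    calc _ ≤ ‖(Ahat - A) sbar‖ + ‖(2 : ℝ)⁻¹ • (ζhat - ζ)‖ := norm_add_le _ _
      _ ≤ ε * ‖sbar‖ + ε₁ / 2 := by
        rw [norm_smul, Real.norm_of_nonneg (by norm_num)]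
        linarith [(Ahat - A).le_of_opNorm_le hAop sbar]
  have hsharp : (lam - ε) * ‖shat - sbar‖ ≤ ε * ‖sbar‖ + ε₁ / 2 :=
    (mul_norm_le_norm_of_mul_norm_sq_le_inner
      (sub_mul_norm_sq_le_inner_apply_add_smul hA_psd hAop lam _)).trans hrhs
  have hfirst : (lam - ε) * ‖shat - sbar‖ ≤ ε₁ + 2 * ε * ‖sbar‖ := by
    linarith [mul_nonneg hε (norm_nonneg sbar)]
  exact ⟨hfirst, (le_div_iff₀ (sub_pos.mpr heps_lt)).mpr (by linarith)⟩

/-- Perturbation bound for regularized quadratic minimizers: let `A, Â` be bounded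
self-adjoint operators on a real Hilbert space with `A ⪰ 0` and `‖Â − A‖ ≤ ε < λ`,
let `‖ζ̂ − ζ‖ ≤ ε₁`, and let `s̄, ŝ` satisfy the first-order optimality conditions
`2(A + λI)s̄ + ζ = 0` and `2(Â + λI)ŝ + ζ̂ = 0` of the respective regularized
quadratic objectives.  Then `(λ − ε)‖ŝ − s̄‖ ≤ ε₁ + 2ε‖s̄‖`, and hence
`‖ŝ − s̄‖ ≤ (ε₁ + 2ε‖s̄‖)/(λ − ε)`. -/
theorem perturbed_quadratic_minimizer_bound
    {H : Type*} [NormedAddCommGroup H] [InnerProductSpace ℝ H] [CompleteSpace H]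
    (A Ahat : H →L[ℝ] H) (hA_sa : IsSelfAdjoint A) (hAhat_sa : IsSelfAdjoint Ahat)
    (hA_psd : ∀ s : H, 0 ≤ ⟪s, A s⟫)
    (lam ε ε₁ : ℝ) (hε : 0 ≤ ε) (heps_lt : ε < lam) (hε₁ : 0 ≤ ε₁)
    (hAop : ‖Ahat - A‖ ≤ ε)
    (ζ ζhat : H) (hζ : ‖ζhat - ζ‖ ≤ ε₁)
    (sbar shat : H)
    (hsbar : (2 : ℝ) • (A sbar + lam • sbar) + ζ = 0)
    (hshat : (2 : ℝ) • (Ahat shat + lam • shat) + ζhat = 0) :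
    (lam - ε) * ‖shat - sbar‖ ≤ ε₁ + 2 * ε * ‖sbar‖ ∧
    ‖shat - sbar‖ ≤ (ε₁ + 2 * ε * ‖sbar‖) / (lam - ε) :=
  perturbed_quadratic_minimizer_bound_general A Ahat hA_psd lam ε ε₁ heps_lt hAop ζ ζhat hζ sbar
    shat hsbar hshat
end
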